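/- If n ≥ 12 is a highly composite number with largest prime factor p ≥ 13 and largest exponent α_1 (the exponent of 2 in n), then p > α_1 + 1. -/

import Mathlib

/-- `d n`: number of positive divisors of `n`. -/
def d (n : ℕ) : ℕ := (Nat.divisors n).card

/-- A positive integer `n` is highly composite if every smaller positive
integer has strictly fewer divisors. -/
def HighlyComposite (n : ℕ) : Prop :=
  0 < n ∧ ∀ m : ℕ, 0 < m → m < n → d m < d n

/-!
Suppose `p ≤ α₁ + 1`. By Bertrand's postulate there is a prime `q` with `p < q ≤ 2p`, and it does
not divide `n` since `p` is the largest prime factor. Let `2 ^ a` be the least power of two above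
`2p`, so `a = ⌊log₂ p⌋ + 2`. Replacing the factor `2 ^ a` of `n` by `q` gives a smaller number
whose divisor count is `d n` times `2 (α₁ - a + 1) / (α₁ + 1)`. That factor is at least `1`
because `2a = 2 ⌊log₂ p⌋ + 4 ≤ p ≤ α₁ + 1`, contradicting that `n` is highly composite.
-/

lemma d_prime_pow {p : ℕ} (hp : p.Prime) (k : ℕ) : d (p ^ k) = k + 1 := by
  rw [d, Nat.divisors_prime_pow hp, Finset.card_map, Finset.card_range]

lemma d_mul_of_coprime {m n : ℕ} (hmn : m.Coprime n) : d (m * n) = d m * d n :=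
  Nat.Coprime.card_divisors_mul hmn

/-- Trading the factor `r ^ a` of a highly composite `n` for a smaller prime `q ∤ n` must not
pay off. -/
theorem HighlyComposite.factorization_add_one_lt {n r q a : ℕ} (hn : HighlyComposite n)
    (hr : r.Prime) (hq : q.Prime) (hqn : ¬ q ∣ n) (hqa : q < r ^ a)
    (ha : a ≤ n.factorization r) : n.factorization r + 1 < 2 * a := by
  set α := n.factorization r
  set t := n / r ^ α
  have hn0 : n ≠ 0 := hn.1.ne'
  have hnt : r ^ α * t = n := Nat.ordProj_mul_ordCompl_eq_self n r
  have ht0 : t ≠ 0 := by intro h; simp [h] at hnt; omega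
  have hrt : r.Coprime t := Nat.coprime_ordCompl hr hn0
  have ha0 : a ≠ 0 := by rintro rfl; simp at hqa; exact hq.ne_zero hqa
  have hrn : r ∣ n :=
    (dvd_pow_self r ha0).trans ((pow_dvd_pow r ha).trans (Nat.ordProj_dvd n r))
  have hqr : r.Coprime q := (Nat.coprime_primes hr hq).2 fun hrq => hqn (hrq ▸ hrn)
  have hqt : q.Coprime t :=
    (hq.coprime_iff_not_dvd.2 hqn).coprime_dvd_right (Nat.div_dvd_of_dvd (Nat.ordProj_dvd n r))
  have hm : r ^ (α - a) * q * t < n := by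
    calc r ^ (α - a) * q * t < r ^ (α - a) * r ^ a * t := by
          gcongr
          exact pow_pos hr.pos _
      _ = n := by rw [← pow_add, Nat.sub_add_cancel ha, hnt]
  have hdq : d q = 2 := by simpa using d_prime_pow hq 1
  have hdm : d (r ^ (α - a) * q * t) = (α - a + 1) * 2 * d t := by
    rw [d_mul_of_coprime ((hrt.pow_left _).mul_left hqt), d_mul_of_coprime (hqr.pow_left _),
      d_prime_pow hr, hdq]
  have hdn : d n = (α + 1) * d t := by
    rw [← hnt, d_mul_of_coprime (hrt.pow_left _), d_prime_pow hr]
  have hd := hn.2 _ (Nat.pos_of_ne_zero (by simp [hr.ne_zero, hq.ne_zero, ht0])) hm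
  rw [hdm, hdn] at hd
  have := Nat.lt_of_mul_lt_mul_right hd
  omega

lemma two_mul_add_four_le_two_pow {k : ℕ} (hk : 4 ≤ k) : 2 * k + 4 ≤ 2 ^ k := by
  obtain ⟨j, rfl⟩ := Nat.exists_eq_add_of_le' (by omega : 2 ≤ k)
  have : j < 2 ^ j := Nat.lt_two_pow_self
  rw [pow_add]
  omega

lemma two_mul_log_two_add_four_le {p : ℕ} (hp : 10 ≤ p) : 2 * Nat.log 2 p + 4 ≤ p := by
  have := Nat.pow_log_le_self 2 (by omega : p ≠ 0)
  rcases Nat.lt_or_ge (Nat.log 2 p) 4 with hlog | hlog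
  · omega
  · exact (two_mul_add_four_le_two_pow hlog).trans this

theorem stmt_9_general (n : ℕ) (hn : HighlyComposite n) (p : ℕ)
    (hmax : ∀ q : ℕ, q.Prime → q ∣ n → q ≤ p) (h13 : 13 ≤ p) :
    n.factorization 2 + 1 < p := by
  by_contra! hp
  obtain ⟨q, hq, hpq, hq2p⟩ := Nat.exists_prime_lt_and_le_two_mul p (by omega)
  have hqn : ¬ q ∣ n := fun h => (hmax q hq h).not_gt hpq
  have hq_lt : q < 2 ^ (Nat.log 2 p + 2) := by
    have := Nat.lt_pow_succ_log_self one_lt_two p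
    rw [pow_succ] at this ⊢
    omega
  have hlog := two_mul_log_two_add_four_le (p := p) (by omega)
  have := hn.factorization_add_one_lt Nat.prime_two hq hqn hq_lt (by omega)
  omega

/-- If n ≥ 12 is highly composite with largest prime factor p ≥ 13 and
2-exponent α₁, then p > α₁ + 1. -/
theorem stmt_9 (n : ℕ) (h12 : 12 ≤ n) (hn : HighlyComposite n)
    (p : ℕ) (hp : p.Prime) (hpdvd : p ∣ n)
    (hmax : ∀ q : ℕ, q.Prime → q ∣ n → q ≤ p) (h13 : 13 ≤ p) :
    n.factorization 2 + 1 < p :=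
  stmt_9_general n hn p hmax h13
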